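/- Let 𝒜 ⊆ M_n(ℂ) be a logmodular subalgebra and let P ∈ 𝒜 be a diagonal projection of the form P = P_J for some subset J ⊆ {1,...,n}, such that Q a (1_n − Q) = 0 for all a ∈ 𝒜, where Q = 1_n − P (equivalently, (1_n−P) 𝒜 P = {0}). Then ℬ = P 𝒜 P is logmodular in the corner C*-algebra 𝒞 = P M_n(ℂ) P: every positive semidefinite element a ∈ 𝒞 can be written as a = b*b with b ∈ ℬ. -/

import Mathlib

/-!
Since `a ↦ a⋆a` is a proper map on a finite-dimensional C⋆-algebra (`‖a⋆a‖ = ‖a‖²`), the set of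
squares `a⋆a` with `a` in the (automatically closed) subalgebra `A` is closed. Logmodularity puts
every positive definite matrix in its closure, hence every positive semidefinite one, so each
`b ≥ 0` factors exactly as `a⋆a` with `a ∈ A`. For `b = PbP` factor `b + (1 - P) = a⋆a`; since
`(1 - P)aP = 0` we have `PaP = aP`, and `(PaP)⋆(PaP) = P(b + 1 - P)P = b`.
-/

open scoped ComplexOrder

/-- A (closed unital) subalgebra `A ⊆ Mₙ(ℂ)` is *logmodular* if the set
`{a* a : a ∈ A, a invertible in A}` is dense in the set of positive invertible
(i.e. positive definite) matrices. -/
def IsLogmodular {n : ℕ} (A : Subalgebra ℂ (Matrix (Fin n) (Fin n) ℂ)) : Prop :=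
  ∀ b : Matrix (Fin n) (Fin n) ℂ, b.PosDef →
    b ∈ closure {x : Matrix (Fin n) (Fin n) ℂ |
      ∃ a ∈ A, (∃ a' ∈ A, a * a' = 1 ∧ a' * a = 1) ∧ x = star a * a}

open Filter Topology

theorem isProperMap_star_mul_self {E : Type*} [NonUnitalNormedRing E] [StarRing E]
    [CStarRing E] [ProperSpace E] : IsProperMap (fun a : E => star a * a) := by
  refine isProperMap_iff_tendsto_cocompact.2 ⟨continuous_star.mul continuous_id, ?_⟩
  simp only [← Metric.cobounded_eq_cocompact, ← tendsto_norm_atTop_iff_cobounded,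
    CStarRing.norm_star_mul_self]
  exact tendsto_norm_cobounded_atTop.atTop_mul_atTop₀ tendsto_norm_cobounded_atTop

theorem Matrix.PosSemidef.mem_closure_setOf_posDef {n 𝕜 : Type*} [Fintype n] [DecidableEq n]
    [RCLike 𝕜] {b : Matrix n n 𝕜} (hb : b.PosSemidef) :
    b ∈ closure {x : Matrix n n 𝕜 | x.PosDef} := by
  have hlim : Tendsto (fun ε : ℝ => b + ε • (1 : Matrix n n 𝕜)) (𝓝[>] 0) (𝓝 b) := by
    have hcont : Continuous fun ε : ℝ => b + ε • (1 : Matrix n n 𝕜) := by fun_prop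
    simpa using (hcont.tendsto 0).mono_left nhdsWithin_le_nhds
  refine mem_closure_of_tendsto hlim ?_
  filter_upwards [self_mem_nhdsWithin] with ε hε
  exact Matrix.PosDef.posSemidef_add hb (Matrix.PosDef.one.smul hε)

open scoped Matrix.Norms.L2Operator in
theorem IsLogmodular.exists_eq_star_mul_self {n : ℕ}
    {A : Subalgebra ℂ (Matrix (Fin n) (Fin n) ℂ)} (hlog : IsLogmodular A)
    {b : Matrix (Fin n) (Fin n) ℂ} (hb : b.PosSemidef) :
    ∃ a ∈ A, b = star a * a := by
  have hA : IsClosed (A : Set (Matrix (Fin n) (Fin n) ℂ)) :=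
    (Subalgebra.toSubmodule A).closed_of_finiteDimensional
  have hS : IsClosed ((fun a => star a * a) '' (A : Set (Matrix (Fin n) (Fin n) ℂ))) :=
    isProperMap_star_mul_self.isClosedMap _ hA
  have hposDef : {x : Matrix (Fin n) (Fin n) ℂ | x.PosDef} ⊆ (fun a => star a * a) '' A := by
    intro x hx
    refine closure_minimal ?_ hS (hlog x hx)
    rintro _ ⟨a, ha, -, rfl⟩
    exact ⟨a, ha, rfl⟩
  obtain ⟨a, ha, hab⟩ := closure_minimal hposDef hS hb.mem_closure_setOf_posDef
  exact ⟨a, ha, hab.symm⟩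

theorem IsStarProjection.star_corner_mul_corner_eq {R : Type*} [Ring R] [StarRing R]
    {P a b : R} (hP : IsStarProjection P) (hPaP : (1 - P) * a * P = 0) (hb : b = P * b * P)
    (hab : b + (1 - P) = star a * a) : star (P * a * P) * (P * a * P) = b := by
  have haP : P * a * P = a * P := by
    rw [sub_mul, sub_mul, one_mul, sub_eq_zero] at hPaP
    exact hPaP.symm
  calc star (P * a * P) * (P * a * P) = P * (star a * a) * P := by
        rw [haP, star_mul, hP.isSelfAdjoint.star_eq]; noncomm_ring
    _ = b := by rw [← hab, mul_add, add_mul, hP.mul_one_sub_self, zero_mul, add_zero, ← hb]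

theorem Matrix.isStarProjection_diagonal_ite {n R : Type*} [Fintype n] [DecidableEq n]
    [Semiring R] [StarRing R] (J : Finset n) :
    IsStarProjection (Matrix.diagonal fun i => if i ∈ J then (1 : R) else 0) where
  isIdempotentElem := by
    rw [IsIdempotentElem, Matrix.diagonal_mul_diagonal]
    congr! 2 with i
    by_cases hi : i ∈ J <;> simp [hi]
  isSelfAdjoint := by
    rw [IsSelfAdjoint, Matrix.star_eq_conjTranspose, Matrix.diagonal_conjTranspose]
    congr! 2 with i
    by_cases hi : i ∈ J <;> simp [hi]

theorem IsStarProjection.posSemidef {n 𝕜 : Type*} [Fintype n] [RCLike 𝕜] {P : Matrix n n 𝕜}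
    (hP : IsStarProjection P) : P.PosSemidef := by
  have h := Matrix.posSemidef_conjTranspose_mul_self P
  rwa [← Matrix.star_eq_conjTranspose, hP.isSelfAdjoint.star_eq, hP.isIdempotentElem.eq] at h

theorem corner_of_logmodular_isLogmodular_general
    {n : ℕ} (A : Subalgebra ℂ (Matrix (Fin n) (Fin n) ℂ))
    (hlog : IsLogmodular A)
    (J : Finset (Fin n)) (P : Matrix (Fin n) (Fin n) ℂ)
    (hP : P = Matrix.diagonal fun i => if i ∈ J then (1 : ℂ) else 0)
    (hnoexit : ∀ a ∈ A, (1 - P) * a * P = 0) :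
    ∀ b : Matrix (Fin n) (Fin n) ℂ, b.PosSemidef → b = P * b * P →
      ∃ c ∈ A, b = star (P * c * P) * (P * c * P) := by
  intro b hb hbP
  have hPproj : IsStarProjection P := by
    rw [hP]; exact Matrix.isStarProjection_diagonal_ite J
  obtain ⟨a, ha, hab⟩ := hlog.exists_eq_star_mul_self (hb.add hPproj.one_sub.posSemidef)
  exact ⟨a, ha, (hPproj.star_corner_mul_corner_eq (hnoexit a ha) hbP hab).symm⟩

/-- Let `A ⊆ Mₙ(ℂ)` be logmodular, and let `P = P_J ∈ A` be a diagonal projection such that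
`(1 − P) A P = {0}`. Then `B = P A P` is logmodular in the corner C*-algebra
`C = P Mₙ(ℂ) P`: every positive semidefinite element `b` of the corner (i.e. `b` positive
semidefinite with `b = P b P`) can be written as `b = c̃* c̃` with `c̃ = P c P ∈ P A P`. -/
theorem corner_of_logmodular_isLogmodular
    {n : ℕ} (A : Subalgebra ℂ (Matrix (Fin n) (Fin n) ℂ))
    (hclosed : IsClosed (A : Set (Matrix (Fin n) (Fin n) ℂ)))
    (hlog : IsLogmodular A)
    (J : Finset (Fin n)) (P : Matrix (Fin n) (Fin n) ℂ)
    (hP : P = Matrix.diagonal fun i => if i ∈ J then (1 : ℂ) else 0)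
    (hPA : P ∈ A)
    (hnoexit : ∀ a ∈ A, (1 - P) * a * P = 0) :
    ∀ b : Matrix (Fin n) (Fin n) ℂ, b.PosSemidef → b = P * b * P →
      ∃ c ∈ A, b = star (P * c * P) * (P * c * P) :=
  corner_of_logmodular_isLogmodular_general A hlog J P hP hnoexit
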